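/- arXiv:math/0411249 — 3 statements merged into one kernel-verified Lean document; each statement's English description precedes it below -/
import Mathlib

section
/- Let 0 < q < 1, 0 < a < q^{-1}, 0 < b < q^{-1} and c < 0. Then for all n, n' ∈ ℕ the series below converges absolutely and the two dual families of big q-Jacobi polynomials are mutually orthogonal: Σ_{m=0}^{∞} (−1)^m · [(1−abq^{2m+1}) (abq;q)_m] / [(1−abq) (q;q)_m] · q^{m(m−1)/2} · D_n(μ(m);a,b,c|q) · D_{n'}(μ(m);b,a,ab/c|q) = 0. -/
open scoped BigOperators

/-- The q-shifted factorial `(a;q)_k`. -/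
noncomputable def qPoch (q a : ℝ) (k : ℕ) : ℝ :=
  ∏ j ∈ Finset.range k, (1 - a * q ^ j)

/-- The dual big q-Jacobi polynomials `D_n(μ(m);a,b,c|q)`,
`μ(m) = q^{-m} + a b q^{m+1}`. -/
noncomputable def dualBigQJacobi (q a b c : ℝ) (n m : ℕ) : ℝ :=
  ∑ k ∈ Finset.range (n + 1),
    qPoch q (q ^ (-(m : ℤ))) k * qPoch q (a * b * q ^ (m + 1)) k *
        qPoch q (q ^ (-(n : ℤ))) k /
      (qPoch q (a * q) k * qPoch q (a * b * q / c) k * qPoch q q k) *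
      (a * q ^ (n + 1) / c) ^ k

/-!
Write `t = a b` and `μ(m) = q^{-m} + t q^{m+1}`. Both polynomials are polynomials in `μ(m)`, so
it suffices that the weight annihilates every polynomial in `μ(m)`. The products
`B_j(m) = (q^{-m};q)_j (t q^{m+1};q)_j = ∏_{i<j} (1 + t q^{2i+1} - q^i μ(m))`
span all polynomials, since `μ B_j` is a combination of `B_j` and `B_{j+1}`. Against `B_j` the
series telescopes: the terms with `m < j` vanish, the term with `m = j + s` is `F(s+1) - F(s)`
with `F(s) = -(1 - q^s) K(s)`, `K = momentTerm`, and `F(0) = 0` while `K(s)` decays like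
`q^{s²/2}`.
-/

open Polynomial

lemma qPoch_zero (q x : ℝ) : qPoch q x 0 = 1 := by simp [qPoch]

lemma qPoch_succ (q x : ℝ) (k : ℕ) : qPoch q x (k + 1) = qPoch q x k * (1 - x * q ^ k) :=
  Finset.prod_range_succ _ _

lemma qPoch_add (q x : ℝ) (k l : ℕ) :
    qPoch q x (k + l) = qPoch q x k * qPoch q (x * q ^ k) l := by
  simp only [qPoch, Finset.prod_range_add, mul_assoc, ← pow_add]

lemma qPoch_succ' (q x : ℝ) (k : ℕ) : qPoch q x (k + 1) = (1 - x) * qPoch q (x * q) k := by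
  rw [add_comm, qPoch_add, pow_one, qPoch_succ, qPoch_zero, one_mul, pow_zero, mul_one]

lemma qPoch_q_pos {q : ℝ} (hq0 : 0 < q) (hq1 : q < 1) (k : ℕ) : 0 < qPoch q q k :=
  Finset.prod_pos fun j _ => by
    rw [sub_pos, ← pow_succ']
    exact pow_lt_one₀ hq0.le hq1 j.succ_ne_zero

lemma qPoch_inv_pow_mul {q : ℝ} (hq : q ≠ 0) (j s : ℕ) :
    qPoch q (q ^ (j + s))⁻¹ j * q ^ ((j + s) * j) * qPoch q q s =
      (-1) ^ j * q ^ j.choose 2 * qPoch q q (j + s) := by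
  induction j generalizing s with
  | zero => simp [qPoch_zero]
  | succ j ih =>
    have hshift : (q ^ (j + 1 + s))⁻¹ * q = (q ^ (j + s))⁻¹ := by
      rw [add_right_comm, pow_succ]; field_simp
    rw [qPoch_succ', hshift, Nat.choose_succ_succ', Nat.choose_one_right,
      show j + 1 + s = j + s + 1 by ring, qPoch_succ]
    calc _ = (1 - (q ^ (j + s + 1))⁻¹) * q ^ (j + s + 1) * q ^ j *
          (qPoch q (q ^ (j + s))⁻¹ j * q ^ ((j + s) * j) * qPoch q q s) := by ring
      _ = _ := by rw [ih]; field_simp; ring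

lemma qPoch_zpow_neg_eq_zero {q : ℝ} (hq : q ≠ 0) {i j : ℕ} (hij : i < j) :
    qPoch q (q ^ (-(i : ℤ))) j = 0 :=
  Finset.prod_eq_zero (Finset.mem_range.mpr hij) (by simp [zpow_neg, hq])

noncomputable def dualBigQJacobiWeight (q t : ℝ) (m : ℕ) : ℝ :=
  (-1) ^ m * ((1 - t * q ^ (2 * m + 1)) * qPoch q (t * q) m / ((1 - t * q) * qPoch q q m)) *
    q ^ (m * (m - 1) / 2)

noncomputable def qLattice (q t : ℝ) (m : ℕ) : ℝ := q ^ (-(m : ℤ)) + t * q ^ (m + 1)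

noncomputable def qLatticeBasis (q t : ℝ) (j : ℕ) : ℝ[X] :=
  ∏ i ∈ Finset.range j, (C (1 + t * q ^ (2 * i + 1)) - C (q ^ i) * X)

lemma eval_qLatticeBasis {q : ℝ} (hq : q ≠ 0) (t : ℝ) (j m : ℕ) :
    (qLatticeBasis q t j).eval (qLattice q t m) =
      qPoch q (q ^ (-(m : ℤ))) j * qPoch q (t * q ^ (m + 1)) j := by
  simp only [qLatticeBasis, qPoch, eval_prod, ← Finset.prod_mul_distrib]
  refine Finset.prod_congr rfl fun i _ => ?_
  simp only [eval_sub, eval_mul, eval_C, eval_X, qLattice, zpow_neg, zpow_natCast]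
  field_simp
  ring

lemma qLatticeBasis_succ (q t : ℝ) (j : ℕ) :
    qLatticeBasis q t (j + 1) =
      qLatticeBasis q t j * (C (1 + t * q ^ (2 * j + 1)) - C (q ^ j) * X) :=
  Finset.prod_range_succ _ _

lemma X_mul_qLatticeBasis {q : ℝ} (hq : q ≠ 0) (t : ℝ) (j : ℕ) :
    X * qLatticeBasis q t j = C (q ^ j)⁻¹ *
      (C (1 + t * q ^ (2 * j + 1)) * qLatticeBasis q t j - qLatticeBasis q t (j + 1)) := by
  rw [qLatticeBasis_succ]
  have : C (q ^ j)⁻¹ * C (q ^ j) = (1 : ℝ[X]) := by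
    rw [← C_mul, inv_mul_cancel₀ (pow_ne_zero j hq), C_1]
  linear_combination (-(X * qLatticeBasis q t j)) * this

lemma span_range_qLatticeBasis {q : ℝ} (hq : q ≠ 0) (t : ℝ) :
    Submodule.span ℝ (Set.range (qLatticeBasis q t)) = ⊤ := by
  set S := Submodule.span ℝ (Set.range (qLatticeBasis q t))
  have hX : ∀ p ∈ S, X * p ∈ S := by
    intro p hp
    induction hp using Submodule.span_induction with
    | mem p hp =>
      obtain ⟨j, rfl⟩ := hp
      rw [X_mul_qLatticeBasis hq, ← smul_eq_C_mul, ← smul_eq_C_mul]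
      exact S.smul_mem _ (S.sub_mem (S.smul_mem _ (Submodule.subset_span ⟨j, rfl⟩))
        (Submodule.subset_span ⟨j + 1, rfl⟩))
    | zero => simp
    | add p r _ _ hp hr => rw [mul_add]; exact S.add_mem hp hr
    | smul c p _ hp => rw [mul_smul_comm]; exact S.smul_mem c hp
  refine Submodule.eq_top_iff'.mpr fun p => ?_
  induction p using Polynomial.induction_on' with
  | add p r hp hr => exact S.add_mem hp hr
  | monomial n c =>
    rw [← smul_X_eq_monomial]
    refine S.smul_mem c ?_
    induction n with
    | zero => exact Submodule.subset_span ⟨0, by simp [qLatticeBasis]⟩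
    | succ n ih => rw [pow_succ']; exact hX _ ih

noncomputable def momentTerm (q t : ℝ) (j s : ℕ) : ℝ :=
  (-1) ^ s * q ^ s.choose 2 * qPoch q (t * q) (2 * j + s) / ((1 - t * q) * q ^ j * qPoch q q s)

lemma dualBigQJacobiWeight_mul_eval_qLatticeBasis {q : ℝ} (hq0 : 0 < q) (hq1 : q < 1) (t : ℝ)
    (j s : ℕ) :
    dualBigQJacobiWeight q t (s + j) * (qLatticeBasis q t j).eval (qLattice q t (s + j)) =
      (1 - t * q ^ (2 * (s + j) + 1)) * momentTerm q t j s := by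
  have hq : q ≠ 0 := hq0.ne'
  have hP := (qPoch_q_pos hq0 hq1 (s + j)).ne'
  have hQ := (qPoch_q_pos hq0 hq1 s).ne'
  have hA : qPoch q (q ^ (-((s + j : ℕ) : ℤ))) j =
      (-1) ^ j * q ^ j.choose 2 * qPoch q q (s + j) / (q ^ ((j + s) * j) * qPoch q q s) := by
    rw [eq_div_iff (by positivity), ← mul_assoc, add_comm s j, ← qPoch_inv_pow_mul hq, zpow_neg,
      zpow_natCast]
  have hR : qPoch q (t * q) (s + j) * qPoch q (t * q ^ (s + j + 1)) j =
      qPoch q (t * q) (2 * j + s) := by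
    rw [show 2 * j + s = s + j + j by ring, qPoch_add q (t * q) (s + j) j]
    ring_nf
  have hexp : (-1) ^ (s + j) * q ^ (s + j).choose 2 * ((-1) ^ j * q ^ j.choose 2) * q ^ j =
      (-1 : ℝ) ^ s * q ^ s.choose 2 * q ^ ((j + s) * j) := by
    have hchoose : (s + j).choose 2 + j.choose 2 + j = s.choose 2 + (j + s) * j := by
      have : ((s + j).choose 2 + j.choose 2 + j : ℚ) = s.choose 2 + (j + s) * j := by
        simp only [Nat.cast_choose_two, Nat.cast_add]; ring
      exact_mod_cast this
    have hsign : (-1 : ℝ) ^ (s + j) * (-1) ^ j = (-1) ^ s := by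
      rw [pow_add, mul_assoc, ← mul_pow]; norm_num
    rw [mul_assoc _ (q ^ s.choose 2), ← pow_add, ← hchoose, ← hsign]; ring
  rw [eval_qLatticeBasis hq, hA, dualBigQJacobiWeight, ← Nat.choose_two_right, momentTerm, ← hR]
  rcases eq_or_ne (1 - t * q) 0 with ht | ht
  · simp [ht]
  field_simp
  linear_combination (1 - t * q ^ (2 * (s + j) + 1)) * qPoch q (t * q) (s + j) *
    qPoch q (t * q ^ (s + j + 1)) j * hexp

lemma momentTerm_succ_mul {q : ℝ} (hq0 : 0 < q) (hq1 : q < 1) (t : ℝ) (j s : ℕ) :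
    momentTerm q t j (s + 1) * (1 - q ^ (s + 1)) =
      -(q ^ s * (1 - t * q ^ (2 * j + s + 1))) * momentTerm q t j s := by
  have hQ := (qPoch_q_pos hq0 hq1 s).ne'
  have hq1' : 1 - q ^ (s + 1) ≠ 0 := (sub_pos.mpr (pow_lt_one₀ hq0.le hq1 s.succ_ne_zero)).ne'
  rcases eq_or_ne (1 - t * q) 0 with ht | ht
  · simp [momentTerm, ht]
  rw [momentTerm, momentTerm, ← add_assoc, qPoch_succ, qPoch_succ, Nat.choose_succ_succ',
    Nat.choose_one_right, ← pow_succ']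
  field_simp
  ring

lemma norm_momentTerm_succ_le {q : ℝ} (hq0 : 0 < q) (hq1 : q < 1) (t : ℝ) (j s : ℕ) :
    ‖momentTerm q t j (s + 1)‖ ≤ q ^ s * (1 + |t|) / (1 - q) * ‖momentTerm q t j s‖ := by
  have hqs : q ^ (s + 1) ≤ q := pow_le_of_le_one hq0.le hq1.le s.succ_ne_zero
  have hfactor : |1 - t * q ^ (2 * j + s + 1)| ≤ 1 + |t| := by
    calc |1 - t * q ^ (2 * j + s + 1)| ≤ 1 + |t| * q ^ (2 * j + s + 1) := by
          simpa [abs_mul, abs_of_pos (pow_pos hq0 _)] using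
            abs_sub (1 : ℝ) (t * q ^ (2 * j + s + 1))
      _ ≤ 1 + |t| := by
          gcongr; exact mul_le_of_le_one_right (abs_nonneg t) (pow_le_one₀ hq0.le hq1.le)
  have hrec := congrArg (‖·‖) (momentTerm_succ_mul hq0 hq1 t j s)
  simp only [norm_mul, norm_neg, Real.norm_eq_abs, abs_of_pos (pow_pos hq0 s),
    abs_of_pos (sub_pos.mpr (pow_lt_one₀ hq0.le hq1 s.succ_ne_zero))] at hrec
  rw [Real.norm_eq_abs, Real.norm_eq_abs, div_mul_eq_mul_div, le_div_iff₀ (sub_pos.mpr hq1)]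
  calc |momentTerm q t j (s + 1)| * (1 - q)
      ≤ |momentTerm q t j (s + 1)| * (1 - q ^ (s + 1)) := by gcongr
    _ = q ^ s * |1 - t * q ^ (2 * j + s + 1)| * |momentTerm q t j s| := hrec
    _ ≤ q ^ s * (1 + |t|) * |momentTerm q t j s| := by gcongr

lemma summable_momentTerm {q : ℝ} (hq0 : 0 < q) (hq1 : q < 1) (t : ℝ) (j : ℕ) :
    Summable (momentTerm q t j) := by
  refine summable_of_ratio_norm_eventually_le (r := 1 / 2) (by norm_num) ?_
  have hlim :
      Filter.Tendsto (fun s : ℕ => q ^ s * (1 + |t|) / (1 - q)) Filter.atTop (nhds 0) := by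
    simpa using
      ((tendsto_pow_atTop_nhds_zero_of_lt_one hq0.le hq1).mul_const (1 + |t|)).div_const (1 - q)
  filter_upwards [hlim.eventually_le_const (by norm_num : (0 : ℝ) < 1 / 2)] with s hs
  exact (norm_momentTerm_succ_le hq0 hq1 t j s).trans (by gcongr)

lemma hasSum_dualBigQJacobiWeight_mul_eval_qLatticeBasis {q : ℝ} (hq0 : 0 < q) (hq1 : q < 1)
    (t : ℝ) (j : ℕ) :
    HasSum (fun m => dualBigQJacobiWeight q t m * (qLatticeBasis q t j).eval (qLattice q t m))
      0 := by
  have hq := hq0.ne'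
  set F : ℕ → ℝ := fun s => -(1 - q ^ s) * momentTerm q t j s
  have hF : Summable F := by
    refine (summable_momentTerm hq0 hq1 t j).norm.of_norm_bounded fun s => ?_
    rw [norm_mul, norm_neg]
    refine mul_le_of_le_one_left (norm_nonneg _) ?_
    rw [Real.norm_eq_abs, abs_of_nonneg (sub_nonneg.mpr (pow_le_one₀ hq0.le hq1.le))]
    linarith [pow_pos hq0 s]
  have htelescope : ∀ s, dualBigQJacobiWeight q t (s + j) *
      (qLatticeBasis q t j).eval (qLattice q t (s + j)) = F (s + 1) - F s := by
    intro s
    have hrec := momentTerm_succ_mul hq0 hq1 t j s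
    rw [dualBigQJacobiWeight_mul_eval_qLatticeBasis hq0 hq1]
    simp only [F]
    linear_combination hrec
  have hshift : HasSum (fun s => F (s + 1) - F s) 0 := by
    simpa [F] using ((hasSum_nat_add_iff' 1).mpr hF.hasSum).sub hF.hasSum
  have hinitial : ∑ i ∈ Finset.range j,
      dualBigQJacobiWeight q t i * (qLatticeBasis q t j).eval (qLattice q t i) = 0 :=
    Finset.sum_eq_zero fun i hi => by
      rw [eval_qLatticeBasis hq, qPoch_zpow_neg_eq_zero hq (Finset.mem_range.mp hi)]; ring
  rw [← hasSum_nat_add_iff' j, hinitial, sub_zero]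
  simpa only [htelescope] using hshift

theorem hasSum_dualBigQJacobiWeight_mul_eval {q : ℝ} (hq0 : 0 < q) (hq1 : q < 1) (t : ℝ)
    (p : ℝ[X]) :
    HasSum (fun m => dualBigQJacobiWeight q t m * p.eval (qLattice q t m)) 0 := by
  have hp : p ∈ Submodule.span ℝ (Set.range (qLatticeBasis q t)) := by
    rw [span_range_qLatticeBasis hq0.ne']; trivial
  induction hp using Submodule.span_induction with
  | mem p hp =>
    obtain ⟨j, rfl⟩ := hp
    exact hasSum_dualBigQJacobiWeight_mul_eval_qLatticeBasis hq0 hq1 t j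
  | zero => simp [hasSum_zero]
  | add p r _ _ hp hr => simpa only [eval_add, mul_add, add_zero] using hp.add hr
  | smul c p _ hp =>
    simpa only [eval_smul, smul_eq_mul, mul_left_comm, mul_zero] using hp.mul_left c

lemma dualBigQJacobi_eq_eval {q : ℝ} (hq : q ≠ 0) (a b c : ℝ) (n : ℕ) :
    ∃ P : ℝ[X], ∀ m, dualBigQJacobi q a b c n m = P.eval (qLattice q (a * b) m) := by
  refine ⟨∑ k ∈ Finset.range (n + 1), C (qPoch q (q ^ (-(n : ℤ))) k /
      (qPoch q (a * q) k * qPoch q (a * b * q / c) k * qPoch q q k) * (a * q ^ (n + 1) / c) ^ k) *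
      qLatticeBasis q (a * b) k, fun m => ?_⟩
  simp only [dualBigQJacobi, eval_finsetSum, eval_mul, eval_C, eval_qLatticeBasis hq]
  refine Finset.sum_congr rfl fun k _ => ?_
  ring

theorem dualBigQJacobi_mutual_orthogonality_general
    (q a b c : ℝ) (hq0 : 0 < q) (hq1 : q < 1)
    (n n' : ℕ) :
    Summable (fun m : ℕ =>
      |(-1 : ℝ) ^ m * ((1 - a * b * q ^ (2 * m + 1)) * qPoch q (a * b * q) m /
            ((1 - a * b * q) * qPoch q q m)) * q ^ (m * (m - 1) / 2) *
        dualBigQJacobi q a b c n m * dualBigQJacobi q b a (a * b / c) n' m|) ∧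
    ∑' m : ℕ,
        (-1 : ℝ) ^ m * ((1 - a * b * q ^ (2 * m + 1)) * qPoch q (a * b * q) m /
              ((1 - a * b * q) * qPoch q q m)) * q ^ (m * (m - 1) / 2) *
          dualBigQJacobi q a b c n m * dualBigQJacobi q b a (a * b / c) n' m = 0 := by
  obtain ⟨P, hP⟩ := dualBigQJacobi_eq_eval hq0.ne' a b c n
  obtain ⟨P', hP'⟩ := dualBigQJacobi_eq_eval hq0.ne' b a (a * b / c) n'
  have hsum := hasSum_dualBigQJacobiWeight_mul_eval hq0 hq1 (a * b) (P * P')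
  have hsummand : ∀ m, dualBigQJacobiWeight q (a * b) m * (P * P').eval (qLattice q (a * b) m) =
      dualBigQJacobiWeight q (a * b) m * dualBigQJacobi q a b c n m *
        dualBigQJacobi q b a (a * b / c) n' m := by
    intro m
    rw [eval_mul, hP, hP', mul_comm b a, mul_assoc]
  simp only [hsummand] at hsum
  exact ⟨summable_abs_iff.mpr hsum.summable, hsum.tsum_eq⟩

theorem dualBigQJacobi_mutual_orthogonality
    (q a b c : ℝ) (hq0 : 0 < q) (hq1 : q < 1)
    (ha0 : 0 < a) (ha1 : a < q⁻¹) (hb0 : 0 < b) (hb1 : b < q⁻¹) (hc : c < 0)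
    (n n' : ℕ) :
    Summable (fun m : ℕ =>
      |(-1 : ℝ) ^ m * ((1 - a * b * q ^ (2 * m + 1)) * qPoch q (a * b * q) m /
            ((1 - a * b * q) * qPoch q q m)) * q ^ (m * (m - 1) / 2) *
        dualBigQJacobi q a b c n m * dualBigQJacobi q b a (a * b / c) n' m|) ∧
    ∑' m : ℕ,
        (-1 : ℝ) ^ m * ((1 - a * b * q ^ (2 * m + 1)) * qPoch q (a * b * q) m /
              ((1 - a * b * q) * qPoch q q m)) * q ^ (m * (m - 1) / 2) *
          dualBigQJacobi q a b c n m * dualBigQJacobi q b a (a * b / c) n' m = 0 :=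
  dualBigQJacobi_mutual_orthogonality_general q a b c hq0 hq1 n n'
end

section
/- Let 0 < q < 1 and let a, b, c be nonzero real numbers such that all denominators below are nonzero (e.g. 0 < a < q^{-1}, 0 < b < q^{-1}, c < 0). Then the dual big q-Jacobi polynomials satisfy the symmetry property D_n(μ(m);a,b,c|q) = D_n(μ(m);ab/c,c,b|q) for all m, n ∈ ℕ. -/
open scoped BigOperators

/-! The identity holds term by term: the substitution `(a, b, c) ↦ (ab/c, c, b)` fixes `ab` and
the argument `a q^{n+1}/c` of the power, and merely swaps the denominator factors `(aq;q)_k` and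
`(abq/c;q)_k`. -/

theorem dualBigQJacobi_symmetry_general
    (q a b c : ℝ) (hb : b ≠ 0) (hc : c ≠ 0)
    (m n : ℕ) :
    dualBigQJacobi q a b c n m = dualBigQJacobi q (a * b / c) c b n m := by
  have hab : a * b / c * c = a * b := div_mul_cancel₀ _ hc
  have hq : a * b * q / b = a * q := by field_simp
  have hpow : a * b / c * q ^ (n + 1) / b = a * q ^ (n + 1) / c := by field_simp
  have hswap : a * b / c * q = a * b * q / c := div_mul_eq_mul_div _ _ _
  unfold dualBigQJacobi
  refine Finset.sum_congr rfl fun k _ => ?_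
  rw [hab, hq, hpow, hswap]
  ring

theorem dualBigQJacobi_symmetry
    (q a b c : ℝ) (hq0 : 0 < q) (hq1 : q < 1)
    (ha : a ≠ 0) (hb : b ≠ 0) (hc : c ≠ 0)
    (hden : ∀ k : ℕ, qPoch q (a * q) k ≠ 0 ∧ qPoch q (a * b * q / c) k ≠ 0 ∧
      qPoch q q k ≠ 0)
    (m n : ℕ) :
    dualBigQJacobi q a b c n m = dualBigQJacobi q (a * b / c) c b n m :=
  dualBigQJacobi_symmetry_general q a b c hb hc m n
end

section
/- Let 0 < q < 1 and a > 0. Then for all m, m' ∈ ℕ the series below converges absolutely and the alternative q-Charlier polynomials satisfy the orthogonality relation Σ_{n=0}^{∞} [a^n q^{n(n+1)/2} / (q;q)_n] · K_m(q^n;a;q) · K_{m'}(q^n;a;q) = [(−aq^m;q)_∞ · a^m (q;q)_m / (1+aq^{2m})] · q^{m(m+1)/2} · δ_{m m'}. -/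
open scoped BigOperators

/-- The infinite q-shifted factorial `(a;q)_∞`. -/
noncomputable def qPochInf (q a : ℝ) : ℝ :=
  ∏' j : ℕ, (1 - a * q ^ j)

/-- The alternative q-Charlier polynomials `K_n(x;a;q)`. -/
noncomputable def altQCharlier (q a : ℝ) (n : ℕ) (x : ℝ) : ℝ :=
  ∑ k ∈ Finset.range (n + 1),
    qPoch q (q ^ (-(n : ℤ))) k * qPoch q (-a * q ^ n) k / qPoch q q k * (q * x) ^ k

/-!
Put `w n = aⁿ q^(n(n+1)/2) / (q;q)ₙ` and `E t = ∑ₙ tⁿ q^(n choose 2) / (q;q)ₙ`. Then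
`∑ₙ w n (q^(n+1))ˡ = qˡ E (a q^(l+1))`, and `E t = (1 + t) E (t q)` gives Euler's identity
`E t = (-t;q)_∞`. Expanding `K_m(qⁿ)` in powers of `q^(n+1)`, the moment
`∑ₙ w n K_m(qⁿ) (q^(n+1))ʲ` becomes a terminating q-Chu–Vandermonde sum, equal to
`qʲ E (a q^(j+m+1)) ∏_{i<m} (a q^(j+1+i) - a q^m)`. This vanishes for `j < m`, so `K_m` is
orthogonal to all polynomials of lower degree; on the diagonal only the leading coefficient
of `K_m` contributes, and `(-aq^m;q)_∞ = (-aq^m;q)_m (1 + aq^(2m)) E (a q^(2m+1))`.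
-/

open Finset Filter Topology

namespace AltQCharlier

variable {q : ℝ}

section QPochhammer

lemma qPoch_zero (x : ℝ) : qPoch q x 0 = 1 := prod_range_zero _

lemma qPoch_succ (x : ℝ) (k : ℕ) : qPoch q x (k + 1) = qPoch q x k * (1 - x * q ^ k) :=
  prod_range_succ _ _

lemma qPoch_succ' (x : ℝ) (k : ℕ) : qPoch q x (k + 1) = (1 - x) * qPoch q (x * q) k := by
  rw [qPoch, prod_range_succ', mul_comm, pow_zero, mul_one]
  exact congrArg _ (prod_congr rfl fun j _ => by ring)

lemma qPoch_eq_zero_of_mul_pow_eq_one {x : ℝ} {m k : ℕ} (hmk : m < k) (hx : x * q ^ m = 1) :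
    qPoch q x k = 0 :=
  prod_eq_zero (mem_range.2 hmk) (by rw [hx, sub_self])

lemma qPoch_mul_pow_choose {x : ℝ} {m : ℕ} (hx : x * q ^ m = 1) :
    qPoch q x m * q ^ (m + 1).choose 2 = (-1) ^ m * qPoch q q m := by
  have hexp : (m + 1).choose 2 = ∑ j ∈ range m, (j + 1) := by
    rw [Nat.choose_two_right, ← sum_range_id, sum_range_succ']
    simp
  have hfactor : ∀ j ∈ range m,
      (1 - x * q ^ (m - 1 - j)) * q ^ (j + 1) = -1 * (1 - q * q ^ j) := by
    intro j hj
    have hqm : q ^ (m - 1 - j) * q ^ (j + 1) = q ^ m := by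
      rw [← pow_add]
      congr 1
      have := mem_range.1 hj
      omega
    linear_combination (-x) * hqm - hx
  rw [hexp, ← prod_pow_eq_pow_sum, qPoch, ← prod_range_reflect, ← prod_mul_distrib,
    prod_congr rfl hfactor, prod_mul_distrib, prod_const, card_range, qPoch]

noncomputable def qPochRatio (q x : ℝ) (k : ℕ) : ℝ := qPoch q x k / qPoch q q k

lemma qPochRatio_zero (x : ℝ) : qPochRatio q x 0 = 1 := by
  simp [qPochRatio, qPoch_zero]

lemma qPochRatio_succ_mul_pow (hq : ∀ n, qPoch q q n ≠ 0) (x : ℝ) (k : ℕ) :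
    qPochRatio q x (k + 1) * q ^ (k + 1) =
      qPochRatio q (x * q) (k + 1) - qPochRatio q (x * q) k := by
  have hk := hq k
  have hk1 : 1 - q * q ^ k ≠ 0 := by
    have := hq (k + 1)
    rw [qPoch_succ] at this
    exact right_ne_zero_of_mul this
  simp only [qPochRatio, qPoch_succ' x, qPoch_succ (x * q), qPoch_succ q]
  field_simp
  ring

/-- The terminating q-Chu–Vandermonde identity for `₂φ₁(x, b; c; q, q)` at `x = q⁻ᵐ`,
multiplied through by `(c;q)_m`. -/
theorem sum_antidiagonal_qPochRatio_mul_qPoch (hq : ∀ n, qPoch q q n ≠ 0) (m : ℕ) :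
    ∀ x b c : ℝ, x * q ^ m = 1 →
      ∑ p ∈ antidiagonal m,
          qPochRatio q x p.1 * qPoch q b p.1 * q ^ p.1 * qPoch q (c * q ^ p.1) p.2 =
        ∏ i ∈ range m, (b - c * q ^ i) := by
  induction m with
  | zero =>
    intro x b c _
    simp [qPochRatio_zero, qPoch_zero]
  | succ m ih =>
    intro x b c hx
    have hx' : x * q * q ^ m = 1 := by rw [← hx, pow_succ']; ring
    set G : ℕ × ℕ → ℝ := fun p =>
      qPochRatio q (x * q) p.1 * qPoch q b p.1 * qPoch q (c * q ^ p.1) p.2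
    have hG : G (m + 1, 0) = 0 := by
      simp only [G, qPochRatio, qPoch_eq_zero_of_mul_pow_eq_one (Nat.lt_succ_self m) hx',
        zero_div, zero_mul]
    -- q-Pascal writes the sum as `∑ G` minus a remainder; peeling the antidiagonal of `∑ G`
    -- from the other end (its corner term vanishes) leaves `b - c` times the sum for `(x q, c q)`.
    have hpascal : ∑ p ∈ antidiagonal (m + 1),
          qPochRatio q x p.1 * qPoch q b p.1 * q ^ p.1 * qPoch q (c * q ^ p.1) p.2 =
        (G (0, m + 1) + ∑ p ∈ antidiagonal m, G (p.1 + 1, p.2)) -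
          ∑ p ∈ antidiagonal m,
            qPochRatio q (x * q) p.1 * qPoch q b (p.1 + 1) * qPoch q (c * q ^ (p.1 + 1)) p.2 := by
      rw [Nat.sum_antidiagonal_succ, add_sub_assoc, ← sum_sub_distrib]
      congr 1
      · simp [G, qPochRatio_zero]
      · refine sum_congr rfl fun p _ => ?_
        rw [mul_right_comm _ _ (q ^ _), qPochRatio_succ_mul_pow hq]
        ring
    have hprod : ∏ i ∈ range (m + 1), (b - c * q ^ i) =
        (b - c) * ∏ i ∈ range m, (b - c * q * q ^ i) := by
      rw [prod_range_succ', pow_zero, mul_one, mul_comm]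
      exact congrArg _ (prod_congr rfl fun i _ => by ring)
    rw [hpascal, ← Nat.sum_antidiagonal_succ, Nat.sum_antidiagonal_succ', hG, zero_add,
      ← sum_sub_distrib, hprod, ← ih (x * q) b (c * q) hx', mul_sum]
    refine sum_congr rfl fun p _ => ?_
    have hc : c * q ^ p.1 * q = c * q * q ^ p.1 := by ring
    have hc' : c * q ^ (p.1 + 1) = c * q * q ^ p.1 := by ring
    simp only [G]
    rw [qPoch_succ b, qPoch_succ' (c * q ^ p.1), hc, hc']
    ring

end QPochhammer

section Euler

lemma one_sub_mul_pow_pos (hq0 : 0 < q) (hq1 : q < 1) (n : ℕ) : 0 < 1 - q * q ^ n := by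
  have := pow_lt_one₀ hq0.le hq1 (Nat.succ_ne_zero n)
  rw [pow_succ'] at this
  linarith

lemma qPoch_self_pos (hq0 : 0 < q) (hq1 : q < 1) (n : ℕ) : 0 < qPoch q q n :=
  prod_pos fun j _ => one_sub_mul_pow_pos hq0 hq1 j

noncomputable def eulerTerm (q t : ℝ) (n : ℕ) : ℝ := t ^ n * q ^ n.choose 2 / qPoch q q n

noncomputable def eulerSum (q t : ℝ) : ℝ := ∑' n, eulerTerm q t n

lemma eulerTerm_zero (t : ℝ) : eulerTerm q t 0 = 1 := by
  simp [eulerTerm, qPoch_zero]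

lemma eulerTerm_mul_pow (t s : ℝ) (n : ℕ) :
    eulerTerm q (t * s) n = eulerTerm q t n * s ^ n := by
  rw [eulerTerm, eulerTerm, mul_pow]
  ring

lemma eulerTerm_succ (hq0 : 0 < q) (hq1 : q < 1) (t : ℝ) (n : ℕ) :
    eulerTerm q t (n + 1) = eulerTerm q t n * (t * q ^ n / (1 - q * q ^ n)) := by
  have h1 := (one_sub_mul_pow_pos hq0 hq1 n).ne'
  have h2 := (qPoch_self_pos hq0 hq1 n).ne'
  rw [eulerTerm, eulerTerm, Nat.choose_succ_succ', Nat.choose_one_right, qPoch_succ]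
  field_simp
  ring

lemma summable_eulerTerm (hq0 : 0 < q) (hq1 : q < 1) (t : ℝ) : Summable (eulerTerm q t) := by
  have hratio : Tendsto (fun n : ℕ => |t| * q ^ n / (1 - q * q ^ n)) atTop (𝓝 0) := by
    have hpow := tendsto_pow_atTop_nhds_zero_of_lt_one hq0.le hq1
    have := (hpow.const_mul |t|).div ((hpow.const_mul q).const_sub 1) (by simp)
    rwa [mul_zero, mul_zero, sub_zero, zero_div] at this
  refine summable_of_ratio_norm_eventually_le (r := 1 / 2) (by norm_num) ?_
  filter_upwards [hratio.eventually_le_const (by norm_num : (0 : ℝ) < 1 / 2)] with n hn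
  rw [eulerTerm_succ hq0 hq1, norm_mul, mul_comm, Real.norm_eq_abs, abs_div, abs_mul,
    abs_of_pos (pow_pos hq0 n), abs_of_pos (one_sub_mul_pow_pos hq0 hq1 n)]
  exact mul_le_mul_of_nonneg_right hn (norm_nonneg _)

lemma eulerSum_zero : eulerSum q 0 = 1 := by
  rw [eulerSum, tsum_eq_single 0 fun n hn => by simp [eulerTerm, zero_pow hn], eulerTerm_zero]

lemma eulerSum_eq_one_add_mul (hq0 : 0 < q) (hq1 : q < 1) (t : ℝ) :
    eulerSum q t = (1 + t) * eulerSum q (t * q) := by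
  have hs := summable_eulerTerm hq0 hq1
  have hterm : ∀ n, eulerTerm q t (n + 1) =
      eulerTerm q (t * q) (n + 1) + t * eulerTerm q (t * q) n := by
    intro n
    have h1 := (one_sub_mul_pow_pos hq0 hq1 n).ne'
    rw [eulerTerm_mul_pow t q, eulerTerm_mul_pow t q, eulerTerm_succ hq0 hq1]
    field_simp
    linear_combination (eulerTerm q t n * t) * inv_mul_cancel₀ h1
  calc eulerSum q t = 1 + ∑' n, eulerTerm q t (n + 1) := by
        rw [eulerSum, (hs t).tsum_eq_zero_add, eulerTerm_zero]
    _ = 1 + ∑' n, eulerTerm q (t * q) (n + 1) + t * eulerSum q (t * q) := by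
        rw [tsum_congr hterm, ((summable_nat_add_iff 1).2 (hs (t * q))).tsum_add
          ((hs (t * q)).mul_left t), tsum_mul_left, eulerSum, add_assoc]
    _ = (1 + t) * eulerSum q (t * q) := by
        rw [eulerSum, (hs (t * q)).tsum_eq_zero_add, eulerTerm_zero]
        ring

lemma eulerSum_eq_qPoch_mul (hq0 : 0 < q) (hq1 : q < 1) (t : ℝ) (N : ℕ) :
    eulerSum q t = qPoch q (-t) N * eulerSum q (t * q ^ N) := by
  induction N with
  | zero => simp [qPoch_zero]
  | succ N ih =>
    rw [ih, eulerSum_eq_one_add_mul hq0 hq1 (t * q ^ N), qPoch_succ, pow_succ]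
    ring_nf

lemma tendsto_eulerSum_mul_pow (hq0 : 0 < q) (hq1 : q < 1) (t : ℝ) :
    Tendsto (fun N : ℕ => eulerSum q (t * q ^ N)) atTop (𝓝 1) := by
  rw [← eulerSum_zero (q := q)]
  refine tendsto_tsum_of_dominated_convergence (summable_eulerTerm hq0 hq1 t).abs (fun n => ?_)
    (Eventually.of_forall fun N n => ?_)
  · have hlim : Tendsto (fun N : ℕ => t * q ^ N) atTop (𝓝 0) := by
      simpa using (tendsto_pow_atTop_nhds_zero_of_lt_one hq0.le hq1).const_mul t
    exact ((continuous_pow n).tendsto 0).comp hlim |>.mul_const _ |>.div_const _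
  · rw [eulerTerm_mul_pow, norm_mul, Real.norm_eq_abs,
      Real.norm_of_nonneg (pow_nonneg (pow_nonneg hq0.le N) n)]
    exact mul_le_of_le_one_right (abs_nonneg _)
      (pow_le_one₀ (pow_nonneg hq0.le N) (pow_le_one₀ hq0.le hq1.le))

theorem eulerSum_eq_qPochInf (hq0 : 0 < q) (hq1 : q < 1) (t : ℝ) :
    eulerSum q t = qPochInf q (-t) := by
  have hmul : Multipliable fun j : ℕ => 1 - -t * q ^ j := by
    simpa [sub_eq_add_neg] using Real.multipliable_one_add_of_summable
      ((summable_geometric_of_lt_one hq0.le hq1).mul_left t)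
  have hlim := hmul.hasProd.tendsto_prod_nat.mul (tendsto_eulerSum_mul_pow hq0 hq1 t)
  rw [mul_one] at hlim
  have hconst : Tendsto (fun N => qPoch q (-t) N * eulerSum q (t * q ^ N)) atTop
      (𝓝 (eulerSum q t)) := by
    simp only [← eulerSum_eq_qPoch_mul hq0 hq1]
    exact tendsto_const_nhds
  exact tendsto_nhds_unique hconst hlim

end Euler

section Orthogonality

noncomputable def weight (q a : ℝ) (n : ℕ) : ℝ := a ^ n * q ^ (n * (n + 1) / 2) / qPoch q q n

lemma succ_choose_two (n : ℕ) : (n + 1).choose 2 = n * (n + 1) / 2 := by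
  rw [Nat.choose_two_right, Nat.add_sub_cancel, mul_comm]

lemma zpow_neg_natCast_mul_pow (hq : q ≠ 0) (m : ℕ) : q ^ (-(m : ℤ)) * q ^ m = 1 := by
  rw [zpow_neg, zpow_natCast, inv_mul_cancel₀ (pow_ne_zero m hq)]

lemma altQCharlier_eq_sum (a : ℝ) (m : ℕ) (x : ℝ) :
    altQCharlier q a m x = ∑ k ∈ range (m + 1),
      qPochRatio q (q ^ (-(m : ℤ))) k * qPoch q (-a * q ^ m) k * (q * x) ^ k :=
  sum_congr rfl fun k _ => by rw [qPochRatio, mul_div_right_comm]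

lemma weight_mul_pow (a : ℝ) (n l : ℕ) :
    weight q a n * (q * q ^ n) ^ l = q ^ l * eulerTerm q (a * q ^ (l + 1)) n := by
  rw [weight, eulerTerm, ← succ_choose_two, Nat.choose_succ_succ', Nat.choose_one_right]
  ring

lemma sum_qPochRatio_mul_eulerSum (hq0 : 0 < q) (hq1 : q < 1) (a s : ℝ) (m : ℕ) :
    ∑ k ∈ range (m + 1), qPochRatio q (q ^ (-(m : ℤ))) k * qPoch q (-a * q ^ m) k * q ^ k *
        eulerSum q (s * q ^ k) =
      eulerSum q (s * q ^ m) * ∏ i ∈ range m, (s * q ^ i - a * q ^ m) := by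
  have hq : ∀ n, qPoch q q n ≠ 0 := fun n => (qPoch_self_pos hq0 hq1 n).ne'
  rw [← Nat.sum_antidiagonal_eq_sum_range_succ (fun k _ => qPochRatio q (q ^ (-(m : ℤ))) k *
    qPoch q (-a * q ^ m) k * q ^ k * eulerSum q (s * q ^ k))]
  have hshift : ∀ p ∈ antidiagonal m,
      eulerSum q (s * q ^ p.1) = qPoch q (-s * q ^ p.1) p.2 * eulerSum q (s * q ^ m) := by
    intro p hp
    rw [eulerSum_eq_qPoch_mul hq0 hq1 _ p.2, mul_assoc, ← pow_add, mem_antidiagonal.1 hp,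
      neg_mul]
  rw [sum_congr rfl fun p hp => by rw [hshift p hp, ← mul_assoc], ← sum_mul,
    sum_antidiagonal_qPochRatio_mul_qPoch hq m _ _ _ (zpow_neg_natCast_mul_pow hq0.ne' m),
    mul_comm]
  exact congrArg _ (prod_congr rfl fun i _ => by ring)

lemma hasSum_weight_mul_pow (hq0 : 0 < q) (hq1 : q < 1) (a : ℝ) (l : ℕ) :
    HasSum (fun n => weight q a n * (q * q ^ n) ^ l) (q ^ l * eulerSum q (a * q ^ (l + 1))) := by
  simp only [weight_mul_pow]
  exact (summable_eulerTerm hq0 hq1 _).hasSum.mul_left _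

lemma hasSum_weight_mul_altQCharlier_mul_pow (hq0 : 0 < q) (hq1 : q < 1) (a : ℝ) (m j : ℕ) :
    HasSum (fun n => weight q a n * altQCharlier q a m (q ^ n) * (q * q ^ n) ^ j)
      (q ^ j * eulerSum q (a * q ^ (j + 1) * q ^ m) *
        ∏ i ∈ range m, (a * q ^ (j + 1) * q ^ i - a * q ^ m)) := by
  set c := fun k => qPochRatio q (q ^ (-(m : ℤ))) k * qPoch q (-a * q ^ m) k
  have hterm : ∀ n : ℕ, weight q a n * altQCharlier q a m (q ^ n) * (q * q ^ n) ^ j =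
      ∑ k ∈ range (m + 1), c k * (weight q a n * (q * q ^ n) ^ (k + j)) := by
    intro n
    rw [altQCharlier_eq_sum, mul_sum, sum_mul]
    exact sum_congr rfl fun k _ => by ring
  have hvalue : q ^ j * eulerSum q (a * q ^ (j + 1) * q ^ m) *
      ∏ i ∈ range m, (a * q ^ (j + 1) * q ^ i - a * q ^ m) =
        ∑ k ∈ range (m + 1), c k * (q ^ (k + j) * eulerSum q (a * q ^ (k + j + 1))) := by
    rw [mul_assoc, ← sum_qPochRatio_mul_eulerSum hq0 hq1, mul_sum]
    refine sum_congr rfl fun k _ => ?_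
    rw [show a * q ^ (k + j + 1) = a * q ^ (j + 1) * q ^ k by ring]
    ring
  rw [funext hterm, hvalue]
  exact hasSum_sum fun k _ => (hasSum_weight_mul_pow hq0 hq1 a (k + j)).mul_left (c k)

lemma hasSum_weight_mul_altQCharlier_mul_altQCharlier (hq0 : 0 < q) (hq1 : q < 1) (a : ℝ)
    (m m' : ℕ) :
    HasSum (fun n => weight q a n * altQCharlier q a m (q ^ n) * altQCharlier q a m' (q ^ n))
      (∑ j ∈ range (m' + 1), qPochRatio q (q ^ (-(m' : ℤ))) j * qPoch q (-a * q ^ m') j *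
        (q ^ j * eulerSum q (a * q ^ (j + 1) * q ^ m) *
          ∏ i ∈ range m, (a * q ^ (j + 1) * q ^ i - a * q ^ m))) := by
  simp only [altQCharlier_eq_sum (m := m'), mul_sum]
  exact hasSum_sum fun j _ => by
    simpa only [mul_comm, mul_left_comm, mul_assoc] using
      (hasSum_weight_mul_altQCharlier_mul_pow hq0 hq1 a m j).mul_left
        (qPochRatio q (q ^ (-(m' : ℤ))) j * qPoch q (-a * q ^ m') j)

lemma prod_mul_pow_sub_eq_zero (a : ℝ) {j m : ℕ} (hj : j < m) :
    ∏ i ∈ range m, (a * q ^ (j + 1) * q ^ i - a * q ^ m) = 0 := by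
  refine prod_eq_zero (i := m - 1 - j) (mem_range.2 (by omega)) ?_
  rw [mul_assoc, ← pow_add, show j + 1 + (m - 1 - j) = m by omega, sub_self]

lemma prod_mul_pow_sub_self (a : ℝ) (m : ℕ) :
    ∏ i ∈ range m, (a * q ^ (m + 1) * q ^ i - a * q ^ m) =
      (-1) ^ m * a ^ m * q ^ (m * m) * qPoch q q m := by
  calc ∏ i ∈ range m, (a * q ^ (m + 1) * q ^ i - a * q ^ m)
      = ∏ i ∈ range m, -(a * q ^ m) * (1 - q * q ^ i) := prod_congr rfl fun i _ => by ring
    _ = (-1) ^ m * a ^ m * q ^ (m * m) * qPoch q q m := by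
      rw [prod_mul_distrib, prod_const, card_range, neg_pow, mul_pow, ← pow_mul, qPoch]
      ring

lemma hasSum_weight_mul_altQCharlier_mul_altQCharlier_of_lt (hq0 : 0 < q) (hq1 : q < 1)
    (a : ℝ) {m m' : ℕ} (h : m' < m) :
    HasSum (fun n => weight q a n * altQCharlier q a m (q ^ n) * altQCharlier q a m' (q ^ n))
      0 := by
  convert hasSum_weight_mul_altQCharlier_mul_altQCharlier hq0 hq1 a m m' using 1
  refine (sum_eq_zero fun j hj => ?_).symm
  rw [prod_mul_pow_sub_eq_zero a (by have := mem_range.1 hj; omega), mul_zero, mul_zero]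

lemma hasSum_weight_mul_altQCharlier_mul_self (hq0 : 0 < q) (hq1 : q < 1) {a : ℝ} (ha : 0 < a)
    (m : ℕ) :
    HasSum (fun n => weight q a n * altQCharlier q a m (q ^ n) * altQCharlier q a m (q ^ n))
      (qPochInf q (-a * q ^ m) * a ^ m * qPoch q q m / (1 + a * q ^ (2 * m)) *
        q ^ (m * (m + 1) / 2)) := by
  convert hasSum_weight_mul_altQCharlier_mul_altQCharlier hq0 hq1 a m m using 1
  rw [sum_eq_single_of_mem m (self_mem_range_succ m) fun j hj hjm => by
    rw [prod_mul_pow_sub_eq_zero a (by have := mem_range.1 hj; omega), mul_zero, mul_zero],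
    prod_mul_pow_sub_self]
  have hleading : qPochRatio q (q ^ (-(m : ℤ))) m * q ^ (m * (m + 1) / 2) = (-1) ^ m := by
    rw [qPochRatio, div_mul_eq_mul_div, ← succ_choose_two,
      qPoch_mul_pow_choose (zpow_neg_natCast_mul_pow hq0.ne' m), mul_div_assoc,
      div_self (qPoch_self_pos hq0 hq1 m).ne', mul_one]
  have hexp : q ^ m * q ^ (m * m) = q ^ (m * (m + 1) / 2) * q ^ (m * (m + 1) / 2) := by
    have h2 : m * (m + 1) / 2 * 2 = m * (m + 1) :=
      Nat.div_mul_cancel (Nat.even_mul_succ_self m).two_dvd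
    rw [← pow_add, ← pow_add]
    congr 1
    linarith
  have hsign : ((-1) ^ m * (-1) ^ m : ℝ) = 1 := by rw [← mul_pow]; norm_num
  have hInf : qPochInf q (-a * q ^ m) = qPoch q (-a * q ^ m) m * (1 + a * q ^ (2 * m)) *
      eulerSum q (a * q ^ (m + 1) * q ^ m) := by
    rw [neg_mul, ← eulerSum_eq_qPochInf hq0 hq1, eulerSum_eq_qPoch_mul hq0 hq1 _ (m + 1),
      qPoch_succ, show a * q ^ m * q ^ (m + 1) = a * q ^ (m + 1) * q ^ m by ring, ← neg_mul]
    ring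
  have hpos : 1 + a * q ^ (2 * m) ≠ 0 := by positivity
  symm
  calc qPochRatio q (q ^ (-(m : ℤ))) m * qPoch q (-a * q ^ m) m *
        (q ^ m * eulerSum q (a * q ^ (m + 1) * q ^ m) *
          ((-1) ^ m * a ^ m * q ^ (m * m) * qPoch q q m))
      = qPochRatio q (q ^ (-(m : ℤ))) m * q ^ (m * (m + 1) / 2) * (-1) ^ m *
          q ^ (m * (m + 1) / 2) * (qPoch q (-a * q ^ m) m *
            eulerSum q (a * q ^ (m + 1) * q ^ m) * a ^ m * qPoch q q m) := by
        linear_combination (qPochRatio q (q ^ (-(m : ℤ))) m * qPoch q (-a * q ^ m) m *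
          eulerSum q (a * q ^ (m + 1) * q ^ m) * (-1) ^ m * a ^ m * qPoch q q m) * hexp
    _ = qPoch q (-a * q ^ m) m * eulerSum q (a * q ^ (m + 1) * q ^ m) * a ^ m * qPoch q q m *
          q ^ (m * (m + 1) / 2) := by
        rw [hleading, hsign, one_mul, mul_comm]
    _ = _ := by
        rw [hInf]
        field_simp

end Orthogonality

end AltQCharlier

open AltQCharlier

theorem altQCharlier_orthogonality
    (q a : ℝ) (hq0 : 0 < q) (hq1 : q < 1) (ha : 0 < a) (m m' : ℕ) :
    Summable (fun n : ℕ =>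
      |a ^ n * q ^ (n * (n + 1) / 2) / qPoch q q n *
        altQCharlier q a m (q ^ n) * altQCharlier q a m' (q ^ n)|) ∧
    ∑' n : ℕ,
        a ^ n * q ^ (n * (n + 1) / 2) / qPoch q q n *
          altQCharlier q a m (q ^ n) * altQCharlier q a m' (q ^ n) =
      qPochInf q (-a * q ^ m) * a ^ m * qPoch q q m / (1 + a * q ^ (2 * m)) *
        q ^ (m * (m + 1) / 2) * (if m = m' then 1 else 0) := by
  have key : HasSum (fun n => weight q a n * altQCharlier q a m (q ^ n) *
      altQCharlier q a m' (q ^ n))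
      (qPochInf q (-a * q ^ m) * a ^ m * qPoch q q m / (1 + a * q ^ (2 * m)) *
        q ^ (m * (m + 1) / 2) * (if m = m' then 1 else 0)) := by
    rcases lt_trichotomy m m' with h | rfl | h
    · rw [if_neg h.ne, mul_zero]
      simpa only [mul_right_comm (weight q a _)] using
        hasSum_weight_mul_altQCharlier_mul_altQCharlier_of_lt hq0 hq1 a h
    · simpa using hasSum_weight_mul_altQCharlier_mul_self hq0 hq1 ha m
    · rw [if_neg h.ne', mul_zero]
      exact hasSum_weight_mul_altQCharlier_mul_altQCharlier_of_lt hq0 hq1 a h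
  exact ⟨key.summable.abs, key.tsum_eq⟩
end
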